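/- For every natural number M ≥ 1 and every nonzero complex number z, (1/2)(z + 1/z)^{4M+2} + (1/2)(z − 1/z)^{4M+2} = (z² + 1/z²) ∑_{k=0}^{M} 2^{4k} C(M+k, 2k) (z² − 1/z²)^{2(M−k)}. -/

import Mathlib

/-!
Put `x = (z + 1/z)²` and `y = (z - 1/z)²`. Then the left side is `(x^(2M+1) + y^(2M+1)) / 2`,
while `x + y = 2 (z² + 1/z²)`, `x - y = 4` and `x y = (z² - 1/z²)²`. So it suffices to show
`x^(2n+1) + y^(2n+1) = (x + y) ∑ₖ C(n + k, 2k) (x - y)^(2k) (x y)^(n-k)`: both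
`x^(2n+1) + y^(2n+1)` and the (homogenized Morgan–Voyce) sum satisfy the recurrence
`uₙ₊₂ = (x² + y²) uₙ₊₁ - x² y² uₙ`, the latter by Pascal's rule applied twice.
-/

open Finset

theorem Nat.choose_add_two_add_choose (n r : ℕ) :
    (n + 2).choose (r + 2) + n.choose (r + 2) = n.choose r + 2 * (n + 1).choose (r + 2) := by
  have h₁ : (n + 2).choose (r + 2) = (n + 1).choose (r + 1) + (n + 1).choose (r + 2) :=
    Nat.choose_succ_succ' _ _
  have h₂ : (n + 1).choose (r + 2) = n.choose (r + 1) + n.choose (r + 2) := Nat.choose_succ_succ' _ _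
  have h₃ : (n + 1).choose (r + 1) = n.choose r + n.choose (r + 1) := Nat.choose_succ_succ' _ _
  omega

section MorganVoyce

variable {R : Type*} [CommRing R]

def morganVoyceTerm (n k : ℕ) (d p : R) : R :=
  (n + k).choose (2 * k) * d ^ k * p ^ (n - k)

/-- The Morgan–Voyce polynomial `b_n(x) = ∑ₖ C(n + k, 2k) xᵏ`, homogenized: `pⁿ b_n(d / p)`. -/
def morganVoyce (n : ℕ) (d p : R) : R :=
  ∑ k ∈ range (n + 1), morganVoyceTerm n k d p

theorem morganVoyceTerm_eq_zero {n k : ℕ} (h : n < k) (d p : R) : morganVoyceTerm n k d p = 0 := by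
  rw [morganVoyceTerm, Nat.choose_eq_zero_of_lt (by omega), Nat.cast_zero, zero_mul, zero_mul]

theorem morganVoyce_eq_sum_range {n N : ℕ} (h : n + 1 ≤ N) (d p : R) :
    morganVoyce n d p = ∑ k ∈ range N, morganVoyceTerm n k d p :=
  sum_subset (range_subset_range.2 h) fun _ _ hk =>
    morganVoyceTerm_eq_zero (by rw [mem_range] at hk; omega) d p

theorem morganVoyceTerm_add_two_zero (n : ℕ) (d p : R) :
    morganVoyceTerm (n + 2) 0 d p = 2 * p * morganVoyceTerm (n + 1) 0 d p
      - p ^ 2 * morganVoyceTerm n 0 d p := by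
  simp only [morganVoyceTerm, add_zero, mul_zero, Nat.choose_zero_right, Nat.cast_one, pow_zero,
    one_mul, Nat.sub_zero]
  ring

theorem morganVoyceTerm_add_two_succ {n k : ℕ} (hk : k < n + 2) (d p : R) :
    morganVoyceTerm (n + 2) (k + 1) d p = d * morganVoyceTerm (n + 1) k d p
      + 2 * p * morganVoyceTerm (n + 1) (k + 1) d p - p ^ 2 * morganVoyceTerm n (k + 1) d p := by
  simp only [morganVoyceTerm]
  rw [show n + 2 + (k + 1) = n + k + 1 + 2 by omega, show n + 1 + k = n + k + 1 by omega,
    show n + 1 + (k + 1) = n + k + 1 + 1 by omega, show n + (k + 1) = n + k + 1 by omega,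
    show 2 * (k + 1) = 2 * k + 2 by omega, show n + 2 - (k + 1) = n + 1 - k by omega,
    show n + 1 - (k + 1) = n - k by omega, show n - (k + 1) = n - k - 1 by omega]
  have pascal := congrArg (Nat.cast : ℕ → R) (Nat.choose_add_two_add_choose (n + k + 1) (2 * k))
  push_cast at pascal
  obtain hkn | rfl | rfl : k < n ∨ k = n ∨ k = n + 1 := by omega
  · obtain ⟨j, hj⟩ : ∃ j, n - k = j + 1 := ⟨n - k - 1, by omega⟩
    rw [show n + 1 - k = j + 2 by omega, hj, Nat.add_sub_cancel]
    linear_combination d ^ (k + 1) * p ^ (j + 2) * pascal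
  · rw [Nat.choose_eq_zero_of_lt (by omega : k + k + 1 < 2 * k + 2), Nat.cast_zero] at pascal ⊢
    rw [show k + 1 - k = 1 by omega, Nat.sub_self, pow_zero, pow_one]
    linear_combination d ^ (k + 1) * p * pascal
  · rw [Nat.choose_eq_zero_of_lt (by omega : n + (n + 1) + 1 < 2 * (n + 1) + 2),
      Nat.choose_eq_zero_of_lt (by omega : n + (n + 1) + 1 + 1 < 2 * (n + 1) + 2),
      Nat.cast_zero] at pascal ⊢
    rw [Nat.sub_self, pow_zero]
    linear_combination d ^ (n + 1 + 1) * pascal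

theorem morganVoyce_add_two (n : ℕ) (d p : R) :
    morganVoyce (n + 2) d p =
      (d + 2 * p) * morganVoyce (n + 1) d p - p ^ 2 * morganVoyce n d p := by
  set T : ℕ → ℕ → R := fun m k => morganVoyceTerm m k d p
  calc morganVoyce (n + 2) d p
      = ∑ k ∈ range (n + 2), (d * T (n + 1) k + 2 * p * T (n + 1) (k + 1) - p ^ 2 * T n (k + 1))
          + (2 * p * T (n + 1) 0 - p ^ 2 * T n 0) := by
        rw [morganVoyce, sum_range_succ', morganVoyceTerm_add_two_zero]
        exact congrArg (· + _) (sum_congr rfl fun k hk =>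
          morganVoyceTerm_add_two_succ (mem_range.1 hk) d p)
    _ = d * ∑ k ∈ range (n + 2), T (n + 1) k
          + 2 * p * (∑ k ∈ range (n + 2), T (n + 1) (k + 1) + T (n + 1) 0)
          - p ^ 2 * (∑ k ∈ range (n + 2), T n (k + 1) + T n 0) := by
        simp only [sum_add_distrib, sum_sub_distrib, ← mul_sum]
        ring
    _ = (d + 2 * p) * morganVoyce (n + 1) d p - p ^ 2 * morganVoyce n d p := by
        rw [← sum_range_succ', ← sum_range_succ', ← morganVoyce_eq_sum_range le_rfl,
          ← morganVoyce_eq_sum_range (by omega), ← morganVoyce_eq_sum_range (by omega)]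
        ring

theorem morganVoyce_zero (d p : R) : morganVoyce 0 d p = 1 := by
  simp [morganVoyce, morganVoyceTerm]

theorem morganVoyce_one (d p : R) : morganVoyce 1 d p = d + p := by
  simp [morganVoyce, morganVoyceTerm, sum_range_succ]
  ring

theorem pow_add_pow_eq_mul_morganVoyce (n : ℕ) (x y : R) :
    x ^ (2 * n + 1) + y ^ (2 * n + 1) = (x + y) * morganVoyce n ((x - y) ^ 2) (x * y) := by
  induction n using Nat.twoStepInduction with
  | zero => rw [morganVoyce_zero]; ring
  | one => rw [morganVoyce_one]; ring
  | more n ih₀ ih₁ =>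
    rw [morganVoyce_add_two]
    linear_combination (x ^ 2 + y ^ 2) * ih₁ - x ^ 2 * y ^ 2 * ih₀

end MorganVoyce

theorem stmt_6_general (M : ℕ) (z : ℂ) (hz : z ≠ 0) :
    (1 / 2) * (z + 1 / z) ^ (4 * M + 2) + (1 / 2) * (z - 1 / z) ^ (4 * M + 2)
    = (z ^ 2 + 1 / z ^ 2) * ∑ k ∈ Finset.range (M + 1),
        2 ^ (4 * k) * ((M + k).choose (2 * k)) *
          (z ^ 2 - 1 / z ^ 2) ^ (2 * (M - k)) := by
  have key := pow_add_pow_eq_mul_morganVoyce M ((z + 1 / z) ^ 2) ((z - 1 / z) ^ 2)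
  have hdiff : (z + 1 / z) ^ 2 - (z - 1 / z) ^ 2 = 4 := by field_simp; ring
  have hprod : (z + 1 / z) ^ 2 * (z - 1 / z) ^ 2 = (z ^ 2 - 1 / z ^ 2) ^ 2 := by ring
  have hsum : (z + 1 / z) ^ 2 + (z - 1 / z) ^ 2 = 2 * (z ^ 2 + 1 / z ^ 2) := by ring
  rw [hdiff, hprod, hsum] at key
  rw [show 4 * M + 2 = 2 * (2 * M + 1) by ring, pow_mul, pow_mul, ← mul_add, key, morganVoyce,
    mul_sum, mul_sum, mul_sum]
  refine sum_congr rfl fun k _ => ?_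
  rw [morganVoyceTerm, pow_mul _ 2 (M - k), pow_mul 2 4 k]
  norm_num
  ring

theorem stmt_6 (M : ℕ) (hM : 1 ≤ M) (z : ℂ) (hz : z ≠ 0) :
    (1 / 2) * (z + 1 / z) ^ (4 * M + 2) + (1 / 2) * (z - 1 / z) ^ (4 * M + 2)
    = (z ^ 2 + 1 / z ^ 2) * ∑ k ∈ Finset.range (M + 1),
        2 ^ (4 * k) * ((M + k).choose (2 * k)) *
          (z ^ 2 - 1 / z ^ 2) ^ (2 * (M - k)) :=
  stmt_6_general M z hz
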